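/- Let Θ = (α,β,γ) ∈ Sₙ³ be an autotopism of some Latin square of order n, with α, β, γ each having at least one fixed point, and let S = {(r,c) : α(r) = r, β(c) = c}. Let 𝒮 be the set of Θ-completable partial Latin squares whose set of filled cells is exactly S. Then for any two P, Q ∈ 𝒮, the number of Latin squares L with Θ as autotopism and O(P) ⊆ O(L) equals the number of Latin squares L' with Θ as autotopism and O(Q) ⊆ O(L'); moreover every element of 𝒮 restricted to S is a Latin square of order equal to the number of fixed points of α, so |𝒮| equals the number of Latin squares of that order. -/
import Mathlib


open scoped Classical

/-- An isotopism of order `n`: a triple of permutations of `Fin n`. -/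
abbrev Iso (n : ℕ) := Equiv.Perm (Fin n) × Equiv.Perm (Fin n) × Equiv.Perm (Fin n)

/-- `O` is (the orthogonal representation of) a partial Latin square:
any two triples agreeing in two coordinates are equal. -/
def IsPLS {n : ℕ} (O : Finset (Fin n × Fin n × Fin n)) : Prop :=
  ∀ t₁ ∈ O, ∀ t₂ ∈ O,
    ((t₁.1 = t₂.1 ∧ t₁.2.1 = t₂.2.1) → t₁ = t₂) ∧
    ((t₁.1 = t₂.1 ∧ t₁.2.2 = t₂.2.2) → t₁ = t₂) ∧
    ((t₁.2.1 = t₂.2.1 ∧ t₁.2.2 = t₂.2.2) → t₁ = t₂)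

/-- The action of an isotopism on a set of triples. -/
def applyIso {n : ℕ} (Θ : Iso n) (O : Finset (Fin n × Fin n × Fin n)) :
    Finset (Fin n × Fin n × Fin n) :=
  O.image fun t => (Θ.1 t.1, Θ.2.1 t.2.1, Θ.2.2 t.2.2)

/-- `Θ` is an autotopism of `O`. -/
def IsAutotopism {n : ℕ} (Θ : Iso n) (O : Finset (Fin n × Fin n × Fin n)) : Prop :=
  applyIso Θ O = O

/-- `Θ` is an autotopism of some non-empty partial Latin square of order `n`. -/
def IsAutPLS {n : ℕ} (Θ : Iso n) : Prop :=
  ∃ O : Finset (Fin n × Fin n × Fin n), O.Nonempty ∧ IsPLS O ∧ IsAutotopism Θ O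

/-- `O` is (the orthogonal representation of) a Latin square of order `n`. -/
def IsLS {n : ℕ} (O : Finset (Fin n × Fin n × Fin n)) : Prop :=
  IsPLS O ∧ O.card = n * n

/-- The number of `i`-cycles of a permutation (fixed points count as 1-cycles). -/
def numCycles {n : ℕ} (π : Equiv.Perm (Fin n)) (i : ℕ) : ℕ :=
  if i = 1 then (Finset.univ.filter fun x => π x = x).card
  else Multiset.count i π.cycleType

/-- `π` has a cycle of length `i` in its disjoint cycle decomposition. -/
def HasCycle {n : ℕ} (π : Equiv.Perm (Fin n)) (i : ℕ) : Prop :=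
  0 < numCycles π i

/-- The lcm condition on a triple of cycle lengths. -/
def Admissible (i j k : ℕ) : Prop :=
  Nat.lcm i j = Nat.lcm i k ∧ Nat.lcm i j = Nat.lcm j k ∧
    Nat.lcm i j = Nat.lcm i (Nat.lcm j k)

/-- Componentwise composition of isotopisms. -/
def compIso {n : ℕ} (Θ Θ' : Iso n) : Iso n :=
  (Θ.1 * Θ'.1, Θ.2.1 * Θ'.2.1, Θ.2.2 * Θ'.2.2)

/-- Componentwise inverse of an isotopism. -/
def invIso {n : ℕ} (Θ : Iso n) : Iso n := (Θ.1⁻¹, Θ.2.1⁻¹, Θ.2.2⁻¹)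

/-- The set of elements of the cycle of `π` containing `a` (its orbit). -/
def orbitFinset {n : ℕ} (π : Equiv.Perm (Fin n)) (a : Fin n) : Finset (Fin n) :=
  Finset.univ.filter fun x => π.SameCycle a x

/-- `P` is `Θ`-completable: `Θ` is an autotopism of the partial Latin square `P`
and `P` can be completed to a Latin square admitting `Θ` as an autotopism. -/
def ThetaCompletable {n : ℕ} (Θ : Iso n) (O : Finset (Fin n × Fin n × Fin n)) : Prop :=
  IsPLS O ∧ IsAutotopism Θ O ∧ ∃ L, IsLS L ∧ IsAutotopism Θ L ∧ O ⊆ L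

/-- The set of filled cells (row, column) of a partial Latin square. -/
def filledCells {n : ℕ} (O : Finset (Fin n × Fin n × Fin n)) : Finset (Fin n × Fin n) :=
  O.image fun t => (t.1, t.2.1)

/-- The partition function. -/
def pnat (k : ℕ) : ℕ := Fintype.card (Nat.Partition k)

section Aux
variable {n : ℕ}

abbrev Triple (n : ℕ) := Fin n × Fin n × Fin n

lemma mem_of_aut {Θ : Iso n} {O : Finset (Triple n)} (h : IsAutotopism Θ O)
    {t : Triple n} (ht : t ∈ O) : (Θ.1 t.1, Θ.2.1 t.2.1, Θ.2.2 t.2.2) ∈ O := by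
  have : (Θ.1 t.1, Θ.2.1 t.2.1, Θ.2.2 t.2.2) ∈ applyIso Θ O :=
    Finset.mem_image.mpr ⟨t, ht, rfl⟩
  rwa [h] at this

lemma iso_inj (Θ : Iso n) :
    Function.Injective (fun t : Triple n => (Θ.1 t.1, Θ.2.1 t.2.1, Θ.2.2 t.2.2)) := by
  intro t1 t2 h
  simp only [Prod.mk.injEq] at h
  obtain ⟨h1, h2, h3⟩ := h
  exact Prod.ext (Θ.1.injective h1) (Prod.ext (Θ.2.1.injective h2) (Θ.2.2.injective h3))

lemma aut_of_mem {Θ : Iso n} {O : Finset (Triple n)}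
    (h : ∀ t ∈ O, (Θ.1 t.1, Θ.2.1 t.2.1, Θ.2.2 t.2.2) ∈ O) : IsAutotopism Θ O := by
  apply Finset.eq_of_subset_of_card_le
  · intro t ht
    obtain ⟨u, hu, rfl⟩ := Finset.mem_image.mp ht
    exact h u hu
  · unfold applyIso
    rw [Finset.card_image_of_injective _ (iso_inj Θ)]

lemma cell_injOn {L : Finset (Triple n)} (hP : IsPLS L) :
    Set.InjOn (fun t : Triple n => (t.1, t.2.1)) L := by
  intro t1 h1 t2 h2 h
  simp only [Prod.mk.injEq] at h
  exact (hP t1 h1 t2 h2).1 h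

lemma ls_cell {L : Finset (Triple n)} (hL : IsLS L) (r c : Fin n) :
    ∃! s, (r, c, s) ∈ L := by
  have himg : L.image (fun t : Triple n => (t.1, t.2.1)) = Finset.univ := by
    apply Finset.eq_univ_of_card
    rw [Finset.card_image_of_injOn (cell_injOn hL.1), hL.2]
    simp
  have hm : (r, c) ∈ L.image (fun t : Triple n => (t.1, t.2.1)) := by
    rw [himg]; exact Finset.mem_univ _
  obtain ⟨t, ht, hte⟩ := Finset.mem_image.mp hm
  obtain ⟨a, b, s⟩ := t
  simp only [Prod.mk.injEq] at hte
  obtain ⟨rfl, rfl⟩ := hte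
  refine ⟨s, ht, fun s' hs' => ?_⟩
  have := (hL.1 _ hs' _ ht).1 ⟨rfl, rfl⟩
  exact congrArg (fun t : Triple n => t.2.2) this

lemma ls_rowsym {L : Finset (Triple n)} (hL : IsLS L) (r s : Fin n) :
    ∃! c, (r, c, s) ∈ L := by
  have hinj : Set.InjOn (fun t : Triple n => (t.1, t.2.2)) L := by
    intro t1 h1 t2 h2 h
    simp only [Prod.mk.injEq] at h
    exact (hL.1 t1 h1 t2 h2).2.1 h
  have himg : L.image (fun t : Triple n => (t.1, t.2.2)) = Finset.univ := by
    apply Finset.eq_univ_of_card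
    rw [Finset.card_image_of_injOn hinj, hL.2]
    simp
  have hm : (r, s) ∈ L.image (fun t : Triple n => (t.1, t.2.2)) := by
    rw [himg]; exact Finset.mem_univ _
  obtain ⟨t, ht, hte⟩ := Finset.mem_image.mp hm
  obtain ⟨a, c, b⟩ := t
  simp only [Prod.mk.injEq] at hte
  obtain ⟨rfl, rfl⟩ := hte
  refine ⟨c, ht, fun c' hc' => ?_⟩
  have := (hL.1 _ hc' _ ht).2.1 ⟨rfl, rfl⟩
  exact congrArg (fun t : Triple n => t.2.1) this

lemma ls_colsym {L : Finset (Triple n)} (hL : IsLS L) (c s : Fin n) :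
    ∃! r, (r, c, s) ∈ L := by
  have hinj : Set.InjOn (fun t : Triple n => (t.2.1, t.2.2)) L := by
    intro t1 h1 t2 h2 h
    simp only [Prod.mk.injEq] at h
    exact (hL.1 t1 h1 t2 h2).2.2 h
  have himg : L.image (fun t : Triple n => (t.2.1, t.2.2)) = Finset.univ := by
    apply Finset.eq_univ_of_card
    rw [Finset.card_image_of_injOn hinj, hL.2]
    simp
  have hm : (c, s) ∈ L.image (fun t : Triple n => (t.2.1, t.2.2)) := by
    rw [himg]; exact Finset.mem_univ _
  obtain ⟨t, ht, hte⟩ := Finset.mem_image.mp hm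
  obtain ⟨a, b, d⟩ := t
  simp only [Prod.mk.injEq] at hte
  obtain ⟨rfl, rfl⟩ := hte
  refine ⟨a, ht, fun r' hr' => ?_⟩
  have := (hL.1 _ hr' _ ht).2.2 ⟨rfl, rfl⟩
  exact congrArg (fun t : Triple n => t.1) this

end Aux
section Aux2
variable {n : ℕ} {α β γ : Equiv.Perm (Fin n)} {O : Finset (Triple n)}

lemma fix_sym (hP : IsPLS O) (hA : IsAutotopism (α, β, γ) O) {r c s : Fin n}
    (ht : (r, c, s) ∈ O) (hr : α r = r) (hc : β c = c) : γ s = s := by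
  have h2 := mem_of_aut hA ht
  simp only [hr, hc] at h2
  exact (congrArg (fun t : Triple n => t.2.2) ((hP _ h2 _ ht).1 ⟨rfl, rfl⟩))

lemma fix_col (hP : IsPLS O) (hA : IsAutotopism (α, β, γ) O) {r c s : Fin n}
    (ht : (r, c, s) ∈ O) (hr : α r = r) (hs : γ s = s) : β c = c := by
  have h2 := mem_of_aut hA ht
  simp only [hr, hs] at h2
  exact (congrArg (fun t : Triple n => t.2.1) ((hP _ h2 _ ht).2.1 ⟨rfl, rfl⟩))

lemma fix_row (hP : IsPLS O) (hA : IsAutotopism (α, β, γ) O) {r c s : Fin n}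
    (ht : (r, c, s) ∈ O) (hc : β c = c) (hs : γ s = s) : α r = r := by
  have h2 := mem_of_aut hA ht
  simp only [hc, hs] at h2
  exact (congrArg (fun t : Triple n => t.1) ((hP _ h2 _ ht).2.2 ⟨rfl, rfl⟩))

lemma card_fix_beta_gamma {L : Finset (Triple n)} (hL : IsLS L)
    (hA : IsAutotopism (α, β, γ) L) {r₀ : Fin n} (hr₀ : α r₀ = r₀) :
    (Finset.univ.filter fun x => β x = x).card
      = (Finset.univ.filter fun x => γ x = x).card := by
  refine Finset.card_bij (fun c _ => (ls_cell hL r₀ c).exists.choose) ?_ ?_ ?_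
  · intro c hc
    simp only [Finset.mem_filter, Finset.mem_univ, true_and] at hc ⊢
    exact fix_sym hL.1 hA (ls_cell hL r₀ c).exists.choose_spec hr₀ hc
  · intro c1 h1 c2 h2 heq
    have m1 := (ls_cell hL r₀ c1).exists.choose_spec
    have m2 := (ls_cell hL r₀ c2).exists.choose_spec
    rw [heq] at m1
    exact congrArg (fun t : Triple n => t.2.1) ((hL.1 _ m1 _ m2).2.1 ⟨rfl, rfl⟩)
  · intro s hs
    simp only [Finset.mem_filter, Finset.mem_univ, true_and] at hs
    obtain ⟨c, hc, -⟩ := ls_rowsym hL r₀ s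
    have hcb : β c = c := fix_col hL.1 hA hc hr₀ hs
    refine ⟨c, by simp [hcb], ?_⟩
    exact ((ls_cell hL r₀ c).unique (ls_cell hL r₀ c).exists.choose_spec hc)

lemma card_fix_alpha_gamma {L : Finset (Triple n)} (hL : IsLS L)
    (hA : IsAutotopism (α, β, γ) L) {c₀ : Fin n} (hc₀ : β c₀ = c₀) :
    (Finset.univ.filter fun x => α x = x).card
      = (Finset.univ.filter fun x => γ x = x).card := by
  refine Finset.card_bij (fun r _ => (ls_cell hL r c₀).exists.choose) ?_ ?_ ?_
  · intro r hr
    simp only [Finset.mem_filter, Finset.mem_univ, true_and] at hr ⊢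
    exact fix_sym hL.1 hA (ls_cell hL r c₀).exists.choose_spec hr hc₀
  · intro r1 h1 r2 h2 heq
    have m1 := (ls_cell hL r1 c₀).exists.choose_spec
    have m2 := (ls_cell hL r2 c₀).exists.choose_spec
    rw [heq] at m1
    exact congrArg (fun t : Triple n => t.1) ((hL.1 _ m1 _ m2).2.2 ⟨rfl, rfl⟩)
  · intro s hs
    simp only [Finset.mem_filter, Finset.mem_univ, true_and] at hs
    obtain ⟨r, hr, -⟩ := ls_colsym hL c₀ s
    have hra : α r = r := fix_row hL.1 hA hr hc₀ hs
    refine ⟨r, by simp [hra], ?_⟩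
    exact ((ls_cell hL r c₀).unique (ls_cell hL r c₀).exists.choose_spec hr)

end Aux2
section Aux3
variable {n : ℕ} {α β γ : Equiv.Perm (Fin n)}

lemma filledCells_card {O : Finset (Triple n)} (hP : IsPLS O) :
    (filledCells O).card = O.card := by
  unfold filledCells
  exact Finset.card_image_of_injOn (cell_injOn hP)

/-- The restriction of a Latin square to the fixed cells. -/
lemma restr_filled {L : Finset (Triple n)} (hL : IsLS L) :
    filledCells (L.filter fun t => α t.1 = t.1 ∧ β t.2.1 = t.2.1)
      = Finset.univ.filter fun p : Fin n × Fin n => α p.1 = p.1 ∧ β p.2 = p.2 := by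
  ext ⟨r, c⟩
  simp only [filledCells, Finset.mem_image, Finset.mem_filter, Finset.mem_univ, true_and]
  constructor
  · rintro ⟨t, ⟨ht, hfix⟩, hte⟩
    simp only [Prod.mk.injEq] at hte
    obtain ⟨rfl, rfl⟩ := hte
    exact hfix
  · rintro ⟨hr, hc⟩
    obtain ⟨s, hs, -⟩ := ls_cell hL r c
    exact ⟨(r, c, s), ⟨hs, hr, hc⟩, rfl⟩

/-- Swap lemma: replacing the fixed-cell part of a Latin square with any suitable
partial Latin square on the fixed cells yields a Latin square. -/
lemma swap_lemma {L Q : Finset (Triple n)} (hL : IsLS L)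
    (hAL : IsAutotopism (α, β, γ) L) (hQP : IsPLS Q)
    (hQfix : ∀ t ∈ Q, α t.1 = t.1 ∧ β t.2.1 = t.2.1 ∧ γ t.2.2 = t.2.2)
    (hQcells : filledCells Q
      = Finset.univ.filter fun p : Fin n × Fin n => α p.1 = p.1 ∧ β p.2 = p.2) :
    IsLS ((L.filter fun t => ¬(α t.1 = t.1 ∧ β t.2.1 = t.2.1)) ∪ Q)
      ∧ IsAutotopism (α, β, γ) ((L.filter fun t => ¬(α t.1 = t.1 ∧ β t.2.1 = t.2.1)) ∪ Q)
      ∧ Q ⊆ (L.filter fun t => ¬(α t.1 = t.1 ∧ β t.2.1 = t.2.1)) ∪ Q := by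
  set A := L.filter fun t : Triple n => ¬(α t.1 = t.1 ∧ β t.2.1 = t.2.1) with hA
  set P₀ := L.filter fun t : Triple n => α t.1 = t.1 ∧ β t.2.1 = t.2.1 with hP₀
  have hmemA : ∀ t ∈ A, t ∈ L ∧ ¬(α t.1 = t.1 ∧ β t.2.1 = t.2.1) := by
    intro t ht; exact Finset.mem_filter.mp ht
  -- PLS property
  have hPLS : IsPLS (A ∪ Q) := by
    have key : ∀ t₁ ∈ A, ∀ t₂ ∈ Q,
        ¬(t₁.1 = t₂.1 ∧ t₁.2.1 = t₂.2.1) ∧ ¬(t₁.1 = t₂.1 ∧ t₁.2.2 = t₂.2.2) ∧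
        ¬(t₁.2.1 = t₂.2.1 ∧ t₁.2.2 = t₂.2.2) := by
      intro t₁ h₁ t₂ h₂
      obtain ⟨hL₁, hnf⟩ := hmemA t₁ h₁
      obtain ⟨hr₂, hc₂, hs₂⟩ := hQfix t₂ h₂
      have ht₁ : (t₁.1, t₁.2.1, t₁.2.2) ∈ L := hL₁
      refine ⟨?_, ?_, ?_⟩
      · rintro ⟨e1, e2⟩
        exact hnf ⟨by rw [e1]; exact hr₂, by rw [e2]; exact hc₂⟩
      · rintro ⟨e1, e2⟩
        have hr₁ : α t₁.1 = t₁.1 := by rw [e1]; exact hr₂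
        have hs₁ : γ t₁.2.2 = t₁.2.2 := by rw [e2]; exact hs₂
        exact hnf ⟨hr₁, fix_col hL.1 hAL ht₁ hr₁ hs₁⟩
      · rintro ⟨e1, e2⟩
        have hc₁ : β t₁.2.1 = t₁.2.1 := by rw [e1]; exact hc₂
        have hs₁ : γ t₁.2.2 = t₁.2.2 := by rw [e2]; exact hs₂
        exact hnf ⟨fix_row hL.1 hAL ht₁ hc₁ hs₁, hc₁⟩
    intro t₁ h₁ t₂ h₂
    rcases Finset.mem_union.mp h₁ with h₁a | h₁q <;>
      rcases Finset.mem_union.mp h₂ with h₂a | h₂q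
    · exact hL.1 t₁ (hmemA t₁ h₁a).1 t₂ (hmemA t₂ h₂a).1
    · obtain ⟨k1, k2, k3⟩ := key t₁ h₁a t₂ h₂q
      exact ⟨fun h => absurd h k1, fun h => absurd h k2, fun h => absurd h k3⟩
    · obtain ⟨k1, k2, k3⟩ := key t₂ h₂a t₁ h₁q
      exact ⟨fun h => absurd ⟨h.1.symm, h.2.symm⟩ k1,
             fun h => absurd ⟨h.1.symm, h.2.symm⟩ k2,
             fun h => absurd ⟨h.1.symm, h.2.symm⟩ k3⟩
    · exact hQP t₁ h₁q t₂ h₂q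
  -- disjointness
  have hdisj : Disjoint A Q := by
    rw [Finset.disjoint_left]
    intro t ht htq
    exact (hmemA t ht).2 ⟨(hQfix t htq).1, (hQfix t htq).2.1⟩
  -- cardinality
  have hcardQ : Q.card = P₀.card := by
    have h1 : Q.card = (filledCells Q).card := (filledCells_card hQP).symm
    have h2 : P₀.card = (filledCells P₀).card :=
      (filledCells_card (fun t ht u hu => hL.1 t (Finset.mem_filter.mp ht).1
        u (Finset.mem_filter.mp hu).1)).symm
    rw [h1, h2, hQcells, restr_filled hL]
  have hcard : (A ∪ Q).card = n * n := by
    rw [Finset.card_union_of_disjoint hdisj, hcardQ, hA, hP₀,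
      Finset.filter_not, Finset.card_sdiff_of_subset (Finset.filter_subset _ _)]
    rw [Nat.sub_add_cancel (Finset.card_filter_le _ _), hL.2]
  -- autotopism
  have hautP₀ : IsAutotopism (α, β, γ) P₀ := by
    apply aut_of_mem
    intro t ht
    obtain ⟨htL, hr, hc⟩ := Finset.mem_filter.mp ht
    refine Finset.mem_filter.mpr ⟨mem_of_aut hAL htL, ?_, ?_⟩ <;> simp [hr, hc]
  have hautQ : IsAutotopism (α, β, γ) Q := by
    apply aut_of_mem
    intro t ht
    obtain ⟨hr, hc, hs⟩ := hQfix t ht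
    simpa [hr, hc, hs] using ht
  have hautA : IsAutotopism (α, β, γ) A := by
    have : A = L \ P₀ := by rw [hA, hP₀, Finset.filter_not]
    rw [this]
    unfold IsAutotopism applyIso at hAL hautP₀ ⊢
    rw [Finset.image_sdiff _ _ (iso_inj (α, β, γ)), hAL, hautP₀]
  have hautM : IsAutotopism (α, β, γ) (A ∪ Q) := by
    unfold IsAutotopism applyIso at hautA hautQ ⊢
    rw [Finset.image_union, hautA, hautQ]
  exact ⟨⟨hPLS, hcard⟩, hautM, Finset.subset_union_right⟩

end Aux3
section Aux4
variable {n : ℕ} {α β γ : Equiv.Perm (Fin n)}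

/-- Elements of a completable PLS with filled cells `S` have all components fixed. -/
lemma mem_fix {P : Finset (Triple n)} (hP : ThetaCompletable (α, β, γ) P)
    (hPc : filledCells P
      = Finset.univ.filter fun p : Fin n × Fin n => α p.1 = p.1 ∧ β p.2 = p.2) :
    ∀ t ∈ P, α t.1 = t.1 ∧ β t.2.1 = t.2.1 ∧ γ t.2.2 = t.2.2 := by
  intro t ht
  have hcell : (t.1, t.2.1) ∈ filledCells P := Finset.mem_image.mpr ⟨t, ht, rfl⟩
  rw [hPc] at hcell
  simp only [Finset.mem_filter, Finset.mem_univ, true_and] at hcell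
  obtain ⟨hr, hc⟩ := hcell
  exact ⟨hr, hc, fix_sym hP.1 hP.2.1 (show (t.1, t.2.1, t.2.2) ∈ P from ht) hr hc⟩

/-- A completable PLS with filled cells `S` is the restriction of any of its
completions to the fixed cells. -/
lemma eq_restr {P L : Finset (Triple n)} (hP : ThetaCompletable (α, β, γ) P)
    (hPc : filledCells P
      = Finset.univ.filter fun p : Fin n × Fin n => α p.1 = p.1 ∧ β p.2 = p.2)
    (hL : IsLS L) (hPL : P ⊆ L) :
    P = L.filter fun t => α t.1 = t.1 ∧ β t.2.1 = t.2.1 := by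
  apply Finset.Subset.antisymm
  · intro t ht
    exact Finset.mem_filter.mpr ⟨hPL ht, (mem_fix hP hPc t ht).1, (mem_fix hP hPc t ht).2.1⟩
  · intro t ht
    obtain ⟨htL, hr, hc⟩ := Finset.mem_filter.mp ht
    have hcell : (t.1, t.2.1) ∈ filledCells P := by
      rw [hPc]; simp [hr, hc]
    obtain ⟨u, hu, hue⟩ := Finset.mem_image.mp hcell
    have : u = t := by
      apply (hL.1 u (hPL hu) t htL).1
      simpa [Prod.mk.injEq] using hue
    rwa [← this]

lemma round_filter {L Q : Finset (Triple n)}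
    (hQfix : ∀ t ∈ Q, α t.1 = t.1 ∧ β t.2.1 = t.2.1 ∧ γ t.2.2 = t.2.2) :
    ((L.filter fun t : Triple n => ¬(α t.1 = t.1 ∧ β t.2.1 = t.2.1)) ∪ Q).filter
        (fun t : Triple n => ¬(α t.1 = t.1 ∧ β t.2.1 = t.2.1))
      = L.filter fun t : Triple n => ¬(α t.1 = t.1 ∧ β t.2.1 = t.2.1) := by
  rw [Finset.filter_union]
  have h1 : Q.filter (fun t : Triple n => ¬(α t.1 = t.1 ∧ β t.2.1 = t.2.1)) = ∅ := by
    apply Finset.filter_false_of_mem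
    intro t ht
    intro h
    exact h ⟨(hQfix t ht).1, (hQfix t ht).2.1⟩
  rw [h1, Finset.union_empty, Finset.filter_filter]
  apply Finset.filter_congr
  intro t _
  tauto

lemma completion_le {P Q : Finset (Triple n)}
    (hP : ThetaCompletable (α, β, γ) P)
    (hPc : filledCells P
      = Finset.univ.filter fun p : Fin n × Fin n => α p.1 = p.1 ∧ β p.2 = p.2)
    (hQ : ThetaCompletable (α, β, γ) Q)
    (hQc : filledCells Q
      = Finset.univ.filter fun p : Fin n × Fin n => α p.1 = p.1 ∧ β p.2 = p.2) :
    Set.ncard {L : Finset (Triple n) | IsLS L ∧ IsAutotopism (α, β, γ) L ∧ P ⊆ L} ≤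
    Set.ncard {L : Finset (Triple n) | IsLS L ∧ IsAutotopism (α, β, γ) L ∧ Q ⊆ L} := by
  set Φ := fun L : Finset (Triple n) =>
    (L.filter fun t : Triple n => ¬(α t.1 = t.1 ∧ β t.2.1 = t.2.1)) ∪ Q with hΦ
  have hrec : ∀ L ∈ {L : Finset (Triple n) | IsLS L ∧ IsAutotopism (α, β, γ) L ∧ P ⊆ L},
      L = (Φ L).filter (fun t : Triple n => ¬(α t.1 = t.1 ∧ β t.2.1 = t.2.1)) ∪ P := by
    intro L hLmem
    obtain ⟨hL, hAL, hPL⟩ := hLmem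
    rw [hΦ]
    simp only
    rw [round_filter (mem_fix hQ hQc)]
    rw [eq_restr hP hPc hL hPL]
    rw [Finset.union_comm, Finset.filter_union_filter_not_eq]
  have hinj : Set.InjOn Φ {L : Finset (Triple n) | IsLS L ∧ IsAutotopism (α, β, γ) L ∧ P ⊆ L} := by
    intro L1 h1 L2 h2 heq
    rw [hrec L1 h1, hrec L2 h2, heq]
  have hsub : Φ '' {L : Finset (Triple n) | IsLS L ∧ IsAutotopism (α, β, γ) L ∧ P ⊆ L}
      ⊆ {L : Finset (Triple n) | IsLS L ∧ IsAutotopism (α, β, γ) L ∧ Q ⊆ L} := by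
    rintro M ⟨L, ⟨hL, hAL, hPL⟩, rfl⟩
    exact swap_lemma hL hAL hQ.1 (mem_fix hQ hQc) hQc
  calc Set.ncard {L : Finset (Triple n) | IsLS L ∧ IsAutotopism (α, β, γ) L ∧ P ⊆ L}
      = Set.ncard (Φ '' {L : Finset (Triple n) | IsLS L ∧ IsAutotopism (α, β, γ) L ∧ P ⊆ L}) :=
        (Set.ncard_image_of_injOn hinj).symm
    _ ≤ _ := Set.ncard_le_ncard hsub (Set.toFinite _)

end Aux4
/-- for an autotopism `Θ = (α,β,γ)` of a Latin square whose components all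
have fixed points, and `S` the cells with fixed row and column: any two `Θ`-completable
partial Latin squares with filled cells `S` have the same number of completions; each
such partial Latin square restricted to `S` is a Latin square of order `f` (the number
of fixed points of `α`) with symbols fixed by `γ`; and their number is the number of
Latin squares of order `f`. -/
theorem stmt19 (n : ℕ) (α β γ : Equiv.Perm (Fin n))
    (hΘ : ∃ L : Finset (Fin n × Fin n × Fin n), IsLS L ∧ IsAutotopism (α, β, γ) L)
    (hfα : ∃ x, α x = x) (hfβ : ∃ x, β x = x) (hfγ : ∃ x, γ x = x) :
    let S : Finset (Fin n × Fin n) :=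
      Finset.univ.filter fun p : Fin n × Fin n => α p.1 = p.1 ∧ β p.2 = p.2
    let f : ℕ := (Finset.univ.filter fun x => α x = x).card
    (∀ P, ThetaCompletable (α, β, γ) P → filledCells P = S →
      ∀ Q, ThetaCompletable (α, β, γ) Q → filledCells Q = S →
        Set.ncard {L : Finset (Fin n × Fin n × Fin n) |
            IsLS L ∧ IsAutotopism (α, β, γ) L ∧ P ⊆ L} =
        Set.ncard {L : Finset (Fin n × Fin n × Fin n) |
            IsLS L ∧ IsAutotopism (α, β, γ) L ∧ Q ⊆ L}) ∧
    (∀ P, ThetaCompletable (α, β, γ) P → filledCells P = S →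
      (P.filter fun t => (t.1, t.2.1) ∈ S).card = f * f ∧
      ∀ t ∈ P, (t.1, t.2.1) ∈ S → γ t.2.2 = t.2.2) ∧
    Set.ncard {P : Finset (Fin n × Fin n × Fin n) |
        ThetaCompletable (α, β, γ) P ∧ filledCells P = S} =
      Set.ncard {L : Finset (Fin f × Fin f × Fin f) | IsLS L} := by
  intro S f
  obtain ⟨L₀, hL₀, hA₀⟩ := hΘ
  obtain ⟨r₀, hr₀⟩ := hfα
  obtain ⟨c₀, hc₀⟩ := hfβ
  have hSdef : S = Finset.univ.filter fun p : Fin n × Fin n => α p.1 = p.1 ∧ β p.2 = p.2 := rfl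
  have hFαcard : (Finset.univ.filter fun x => α x = x).card = f := rfl
  have hFβcard : (Finset.univ.filter fun x => β x = x).card = f := by
    rw [card_fix_beta_gamma hL₀ hA₀ hr₀, ← card_fix_alpha_gamma hL₀ hA₀ hc₀]
  have hFγcard : (Finset.univ.filter fun x => γ x = x).card = f := by
    rw [← card_fix_alpha_gamma hL₀ hA₀ hc₀]
  have hScard : S.card = f * f := by
    have : S = (Finset.univ.filter fun x => α x = x) ×ˢ
        (Finset.univ.filter fun x => β x = x) := by
      ext ⟨a, b⟩
      simp [hSdef, Finset.mem_product]
    rw [this, Finset.card_product, hFαcard, hFβcard]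
  have cardP : ∀ P : Finset (Triple n), ThetaCompletable (α, β, γ) P →
      filledCells P = S → P.card = f * f := by
    intro P hP hPc
    rw [← filledCells_card hP.1, hPc, hScard]
  refine ⟨?_, ?_, ?_⟩
  · intro P hP hPc Q hQ hQc
    exact le_antisymm (completion_le hP (hSdef ▸ hPc) hQ (hSdef ▸ hQc))
      (completion_le hQ (hSdef ▸ hQc) hP (hSdef ▸ hPc))
  · intro P hP hPc
    have hfilt : (P.filter fun t => (t.1, t.2.1) ∈ S) = P := by
      apply Finset.filter_true_of_mem
      intro t ht
      rw [← hPc]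
      exact Finset.mem_image.mpr ⟨t, ht, rfl⟩
    refine ⟨by rw [hfilt]; exact cardP P hP hPc, ?_⟩
    intro t ht _
    exact (mem_fix hP (hSdef ▸ hPc) t ht).2.2
  · -- Part 3: bijection with Latin squares of order f
    set eα : Fin f → Fin n :=
      fun i => (((Finset.univ.filter fun x => α x = x).orderIsoOfFin hFαcard) i : Fin n)
      with heα
    set eβ : Fin f → Fin n :=
      fun i => (((Finset.univ.filter fun x => β x = x).orderIsoOfFin hFβcard) i : Fin n)
      with heβ
    set eγ : Fin f → Fin n :=
      fun i => (((Finset.univ.filter fun x => γ x = x).orderIsoOfFin hFγcard) i : Fin n)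
      with heγ
    have heαfix : ∀ i, α (eα i) = eα i := by
      intro i
      exact (Finset.mem_filter.mp
        ((((Finset.univ.filter fun x => α x = x).orderIsoOfFin hFαcard) i).2)).2
    have heβfix : ∀ i, β (eβ i) = eβ i := by
      intro i
      exact (Finset.mem_filter.mp
        ((((Finset.univ.filter fun x => β x = x).orderIsoOfFin hFβcard) i).2)).2
    have heγfix : ∀ i, γ (eγ i) = eγ i := by
      intro i
      exact (Finset.mem_filter.mp
        ((((Finset.univ.filter fun x => γ x = x).orderIsoOfFin hFγcard) i).2)).2
    have heαsurj : ∀ x, α x = x → ∃ i, eα i = x := by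
      intro x hx
      refine ⟨((Finset.univ.filter fun x => α x = x).orderIsoOfFin hFαcard).symm
        ⟨x, by simp [hx]⟩, ?_⟩
      rw [heα]
      simp
    have heβsurj : ∀ x, β x = x → ∃ i, eβ i = x := by
      intro x hx
      refine ⟨((Finset.univ.filter fun x => β x = x).orderIsoOfFin hFβcard).symm
        ⟨x, by simp [hx]⟩, ?_⟩
      rw [heβ]
      simp
    have heγsurj : ∀ x, γ x = x → ∃ i, eγ i = x := by
      intro x hx
      refine ⟨((Finset.univ.filter fun x => γ x = x).orderIsoOfFin hFγcard).symm
        ⟨x, by simp [hx]⟩, ?_⟩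
      rw [heγ]
      simp
    have heαinj : Function.Injective eα := fun i j h =>
      ((Finset.univ.filter fun x => α x = x).orderIsoOfFin hFαcard).injective (Subtype.ext h)
    have heβinj : Function.Injective eβ := fun i j h =>
      ((Finset.univ.filter fun x => β x = x).orderIsoOfFin hFβcard).injective (Subtype.ext h)
    have heγinj : Function.Injective eγ := fun i j h =>
      ((Finset.univ.filter fun x => γ x = x).orderIsoOfFin hFγcard).injective (Subtype.ext h)
    set emb : Triple f → Triple n := fun t => (eα t.1, eβ t.2.1, eγ t.2.2) with hemb
    have hembinj : Function.Injective emb := by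
      intro t1 t2 h
      simp only [hemb, Prod.mk.injEq] at h
      exact Prod.ext (heαinj h.1) (Prod.ext (heβinj h.2.1) (heγinj h.2.2))
    have hkey : {P : Finset (Triple n) | ThetaCompletable (α, β, γ) P ∧ filledCells P = S}
        = (fun L' : Finset (Triple f) => L'.image emb) '' {L' | IsLS L'} := by
      ext P
      simp only [Set.mem_setOf_eq, Set.mem_image]
      constructor
      · rintro ⟨hP, hPc⟩
        refine ⟨Finset.univ.filter fun u => emb u ∈ P, ?_, ?_⟩
        · -- IsLS of the pulled-back square
          have himg : (Finset.univ.filter fun u => emb u ∈ P).image emb = P := by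
            apply Finset.Subset.antisymm
            · intro t ht
              obtain ⟨u, hu, rfl⟩ := Finset.mem_image.mp ht
              exact (Finset.mem_filter.mp hu).2
            · intro t ht
              obtain ⟨hr, hc, hs⟩ := mem_fix hP (hSdef ▸ hPc) t ht
              obtain ⟨i, hi⟩ := heαsurj _ hr
              obtain ⟨j, hj⟩ := heβsurj _ hc
              obtain ⟨k, hk⟩ := heγsurj _ hs
              refine Finset.mem_image.mpr ⟨(i, j, k), ?_, ?_⟩
              · apply Finset.mem_filter.mpr
                refine ⟨Finset.mem_univ _, ?_⟩
                show (eα i, eβ j, eγ k) ∈ P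
                rw [hi, hj, hk]
                exact ht
              · show (eα i, eβ j, eγ k) = t
                rw [hi, hj, hk]
          constructor
          · -- IsPLS
            intro u1 h1 u2 h2
            have m1 : emb u1 ∈ P := (Finset.mem_filter.mp h1).2
            have m2 : emb u2 ∈ P := (Finset.mem_filter.mp h2).2
            have hpls := hP.1 _ m1 _ m2
            refine ⟨?_, ?_, ?_⟩
            · rintro ⟨e1, e2⟩
              exact hembinj (hpls.1 ⟨congrArg eα e1, congrArg eβ e2⟩)
            · rintro ⟨e1, e2⟩
              exact hembinj (hpls.2.1 ⟨congrArg eα e1, congrArg eγ e2⟩)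
            · rintro ⟨e1, e2⟩
              exact hembinj (hpls.2.2 ⟨congrArg eβ e1, congrArg eγ e2⟩)
          · -- card
            have := Finset.card_image_of_injective
              (Finset.univ.filter fun u => emb u ∈ P) hembinj
            rw [himg] at this
            rw [← this, cardP P hP hPc]
        · -- image equals P  (same as himg above)
          apply Finset.Subset.antisymm
          · intro t ht
            obtain ⟨u, hu, rfl⟩ := Finset.mem_image.mp ht
            exact (Finset.mem_filter.mp hu).2
          · intro t ht
            obtain ⟨hr, hc, hs⟩ := mem_fix hP (hSdef ▸ hPc) t ht
            obtain ⟨i, hi⟩ := heαsurj _ hr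
            obtain ⟨j, hj⟩ := heβsurj _ hc
            obtain ⟨k, hk⟩ := heγsurj _ hs
            refine Finset.mem_image.mpr ⟨(i, j, k), ?_, ?_⟩
            · apply Finset.mem_filter.mpr
              refine ⟨Finset.mem_univ _, ?_⟩
              show (eα i, eβ j, eγ k) ∈ P
              rw [hi, hj, hk]
              exact ht
            · show (eα i, eβ j, eγ k) = t
              rw [hi, hj, hk]
      · rintro ⟨L', hL', rfl⟩
        have hfixIm : ∀ t ∈ L'.image emb,
            α t.1 = t.1 ∧ β t.2.1 = t.2.1 ∧ γ t.2.2 = t.2.2 := by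
          intro t ht
          obtain ⟨u, hu, rfl⟩ := Finset.mem_image.mp ht
          exact ⟨heαfix u.1, heβfix u.2.1, heγfix u.2.2⟩
        have hPLSIm : IsPLS (L'.image emb) := by
          intro t1 h1 t2 h2
          obtain ⟨u1, hu1, rfl⟩ := Finset.mem_image.mp h1
          obtain ⟨u2, hu2, rfl⟩ := Finset.mem_image.mp h2
          have hpls := hL'.1 _ hu1 _ hu2
          refine ⟨?_, ?_, ?_⟩
          · rintro ⟨e1, e2⟩
            exact congrArg emb (hpls.1 ⟨heαinj e1, heβinj e2⟩)
          · rintro ⟨e1, e2⟩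
            exact congrArg emb (hpls.2.1 ⟨heαinj e1, heγinj e2⟩)
          · rintro ⟨e1, e2⟩
            exact congrArg emb (hpls.2.2 ⟨heβinj e1, heγinj e2⟩)
        have hcellsIm : filledCells (L'.image emb)
            = Finset.univ.filter fun p : Fin n × Fin n => α p.1 = p.1 ∧ β p.2 = p.2 := by
          ext ⟨r, c⟩
          simp only [filledCells, Finset.mem_image, Finset.mem_filter, Finset.mem_univ,
            true_and]
          constructor
          · rintro ⟨t, ⟨u, hu, rfl⟩, hte⟩
            simp only [Prod.mk.injEq] at hte
            rw [← hte.1, ← hte.2]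
            exact ⟨heαfix u.1, heβfix u.2.1⟩
          · rintro ⟨hr, hc⟩
            obtain ⟨i, hi⟩ := heαsurj r hr
            obtain ⟨j, hj⟩ := heβsurj c hc
            obtain ⟨s, hs, -⟩ := ls_cell hL' i j
            refine ⟨emb (i, j, s), ⟨(i, j, s), hs, rfl⟩, ?_⟩
            show (eα i, eβ j) = (r, c)
            rw [hi, hj]
        have hautIm : IsAutotopism (α, β, γ) (L'.image emb) := by
          apply aut_of_mem
          intro t ht
          obtain ⟨hr, hc, hs⟩ := hfixIm t ht
          simpa [hr, hc, hs] using ht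
        obtain ⟨hMLS, hMaut, hQM⟩ := swap_lemma hL₀ hA₀ hPLSIm hfixIm hcellsIm
        exact ⟨⟨hPLSIm, hautIm, _, hMLS, hMaut, hQM⟩, hSdef ▸ hcellsIm⟩
    rw [hkey]
    rw [Set.ncard_image_of_injOn (fun a _ b _ h => Finset.image_injective hembinj h)]
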